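/- arXiv:1304.5030 — 2 statements merged into one kernel-verified Lean document; each statement's English description precedes it below -/
import Mathlib

section
/- Under the hypotheses of the previous statement (with $0<\beta<\beta_0=\mu_2 S/(8b)$, $1/2<B_1,B_2<2$, $S/\sqrt2\le A_1,A_2\le b$, $0<D\le 2$, $\mu_1\ge\mu_2>0$), the solutions $t_i = (\mu_j B_j A_i - \beta A_j D)/(\mu_1\mu_2 B_1B_2 - \beta^2 D^2)$ (for $\{i,j\}=\{1,2\}$) satisfy the uniform bounds $t_i \ge S/(2^6\mu_1)$ and $t_i \le 2^9 b^3 \mu_1/(\mu_2^2 S^2)$ for $i=1,2$. -/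
/-! Since `β D ≤ 2β < 3μ₂/8`, the determinant `μ₁μ₂B₁B₂ - β²D²` stays between `μ₁μ₂/16` and
`4μ₁μ₂`. In each numerator the cross term `β A_j D ≤ 2βb < μ₂S/4` is dominated by
`μ_j B_j A_i ≥ μ₂S/3` (using `A_i ≥ S/√2 ≥ 2S/3`), so the numerators lie between `μ₂S/12` and
`2μ₁b`. Hence `t_i ∈ [S/(48μ₁), 32b/μ₂]`, which lies inside the claimed interval because
`S ≤ 3b/2` and `μ₂ ≤ μ₁`. -/

open Set

lemma le_three_halves_mul_of_div_sqrt_two_le {S A : ℝ} (hS : 0 ≤ S) (h : S / √2 ≤ A) :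
    S ≤ 3 / 2 * A := by
  have hsqrt : √2 ≤ 3 / 2 := Real.sqrt_le_iff.mpr ⟨by norm_num, by norm_num⟩
  have hA : 0 ≤ A := (div_nonneg hS (Real.sqrt_nonneg 2)).trans h
  calc S ≤ √2 * A := (div_le_iff₀' (by positivity)).mp h
    _ ≤ 3 / 2 * A := mul_le_mul_of_nonneg_right hsqrt hA

lemma div_mem_Icc_div {N d a b c e : ℝ} (ha : 0 ≤ a) (hc : 0 < c)
    (hN : N ∈ Icc a b) (hd : d ∈ Icc c e) : N / d ∈ Icc (a / e) (b / c) :=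
  ⟨div_le_div₀ (ha.trans hN.1) hN.1 (hc.trans_le hd.1) hd.2,
    div_le_div₀ (ha.trans (hN.1.trans hN.2)) hN.2 hc hd.1⟩

lemma cramer_det_mem_Icc {μ₁ μ₂ B₁ B₂ c : ℝ} (hμ : μ₂ ≤ μ₁) (hμ₂ : 0 < μ₂)
    (hB₁ : 1 / 2 < B₁) (hB₁' : B₁ < 2) (hB₂ : 1 / 2 < B₂) (hB₂' : B₂ < 2)
    (hc : 0 ≤ c) (hc' : c ≤ 3 * μ₂ / 8) :
    μ₁ * μ₂ * B₁ * B₂ - c ^ 2 ∈ Icc (μ₁ * μ₂ / 16) (4 * μ₁ * μ₂) := by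
  have hμμ : 0 < μ₁ * μ₂ := mul_pos (hμ₂.trans_le hμ) hμ₂
  have hBB : 1 / 4 ≤ B₁ * B₂ := by nlinarith
  have hBB' : B₁ * B₂ ≤ 4 := by nlinarith
  have hc2 : c ^ 2 ≤ 9 / 64 * (μ₁ * μ₂) := by nlinarith
  constructor <;> nlinarith

lemma cramer_numerator_mem_Icc {μ₁ μ₂ m S b β B A A' D : ℝ}
    (hm : μ₂ ≤ m) (hm' : m ≤ μ₁) (hμ₂ : 0 ≤ μ₂) (hB : 1 / 2 < B) (hB' : B < 2)
    (hSA : S ≤ 3 / 2 * A) (hS : 0 ≤ S) (hA : A ≤ b) (hA'0 : 0 ≤ A') (hA' : A' ≤ b)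
    (hβ : 0 ≤ β) (hD : 0 ≤ D) (hβb : 4 * (β * D * b) ≤ μ₂ * S) :
    m * B * A - β * A' * D ∈ Icc (μ₂ * S / 12) (2 * μ₁ * b) := by
  have hA0 : 0 ≤ A := by linarith
  have hcA' : 0 ≤ β * D * A' := by positivity
  have hcA'b : β * D * A' ≤ β * D * b := mul_le_mul_of_nonneg_left hA' (by positivity)
  have hmBA : μ₂ * S / 3 ≤ m * B * A := by
    calc μ₂ * S / 3 ≤ μ₂ * (1 / 2) * A := by nlinarith
      _ ≤ m * B * A := by gcongr; linarith
  have hmBA' : m * B * A ≤ μ₁ * 2 * b := by gcongr <;> linarith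
  constructor <;> linarith

theorem stmt_4 (μ₁ μ₂ S b β A₁ A₂ B₁ B₂ D : ℝ)
    (hμ : μ₁ ≥ μ₂) (hμ₂ : 0 < μ₂) (hS : 0 < S) (hb : 0 < b)
    (hβpos : 0 < β) (hβ : β < μ₂ * S / (8 * b))
    (hB₁ : 1 / 2 < B₁) (hB₁' : B₁ < 2) (hB₂ : 1 / 2 < B₂) (hB₂' : B₂ < 2)
    (hA₁b : A₁ ≤ b) (hA₂b : A₂ ≤ b)
    (hA₁S : S / Real.sqrt 2 ≤ A₁) (hA₂S : S / Real.sqrt 2 ≤ A₂)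
    (hD : 0 < D) (hD2 : D ≤ 2) :
    let t₁ := (μ₂ * B₂ * A₁ - β * A₂ * D) / (μ₁ * μ₂ * B₁ * B₂ - β ^ 2 * D ^ 2)
    let t₂ := (μ₁ * B₁ * A₂ - β * A₁ * D) / (μ₁ * μ₂ * B₁ * B₂ - β ^ 2 * D ^ 2)
    (S / (2 ^ 6 * μ₁) ≤ t₁ ∧ t₁ ≤ 2 ^ 9 * b ^ 3 * μ₁ / (μ₂ ^ 2 * S ^ 2)) ∧
    (S / (2 ^ 6 * μ₁) ≤ t₂ ∧ t₂ ≤ 2 ^ 9 * b ^ 3 * μ₁ / (μ₂ ^ 2 * S ^ 2)) := by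
  intro t₁ t₂
  have hμ₁ : 0 < μ₁ := hμ₂.trans_le hμ
  have hSA₁ := le_three_halves_mul_of_div_sqrt_two_le hS.le hA₁S
  have hSA₂ := le_three_halves_mul_of_div_sqrt_two_le hS.le hA₂S
  have hSb : S ≤ 3 / 2 * b := by linarith
  have hβb : 4 * (β * D * b) ≤ μ₂ * S := by
    have h8 := (lt_div_iff₀ (by positivity)).mp hβ
    have h2 : β * D * b ≤ β * 2 * b := by gcongr
    linarith
  have hβD : β * D ≤ 3 * μ₂ / 8 := by
    have := hβb.trans (mul_le_mul_of_nonneg_left hSb hμ₂.le)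
    nlinarith
  have hdet := cramer_det_mem_Icc hμ hμ₂ hB₁ hB₁' hB₂ hB₂' (by positivity) hβD
  rw [mul_pow] at hdet
  have hconst : Icc (μ₂ * S / 12 / (4 * μ₁ * μ₂)) (2 * μ₁ * b / (μ₁ * μ₂ / 16)) ⊆
      Icc (S / (2 ^ 6 * μ₁)) (2 ^ 9 * b ^ 3 * μ₁ / (μ₂ ^ 2 * S ^ 2)) := by
    apply Icc_subset_Icc
    · rw [div_le_div_iff₀ (by positivity) (by positivity)]
      nlinarith [mul_pos (mul_pos hμ₁ hμ₂) hS]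
    · rw [div_le_div_iff₀ (by positivity) (by positivity)]
      have hS2 : μ₂ * S ^ 2 ≤ 16 * (μ₁ * b ^ 2) := by
        have : S ^ 2 ≤ (3 / 2 * b) ^ 2 := pow_le_pow_left₀ hS.le hSb 2
        nlinarith
      have := mul_le_mul_of_nonneg_left hS2 (by positivity : 0 ≤ 2 * μ₁ * b * μ₂)
      linarith
  exact ⟨hconst (div_mem_Icc_div (by positivity) (by positivity)
      (cramer_numerator_mem_Icc le_rfl hμ hμ₂.le hB₂ hB₂' hSA₁ hS.le hA₁b (by linarith) hA₂b
        hβpos.le hD.le hβb) hdet),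
    hconst (div_mem_Icc_div (by positivity) (by positivity)
      (cramer_numerator_mem_Icc hμ le_rfl hμ₂.le hB₁ hB₁' hSA₂ hS.le hA₂b (by linarith) hA₁b
        hβpos.le hD.le hβb) hdet)⟩
end

section
/- Let $\mu_1,\mu_2,\beta>0$ and positive reals $A_1,A_2,B_1,B_2,D$ with $B_1=B_2=1$, $\mu_1\mu_2 - \beta^2 D^2 > 0$, $D\le 2$, $A_1,A_2\le b$, and suppose $\mu_1\mu_2-\beta^2D^2 \ge \mu_2^2 S^2/(2^8 b^2)$ for some $S>0$. Define $J = \tfrac14\frac{\mu_2 A_1^2 - 2\beta A_1 A_2 D + \mu_1 A_2^2}{\mu_1\mu_2 - \beta^2 D^2}$ and $I = \frac{A_1^2}{4\mu_1} + \frac{A_2^2}{4\mu_2}$. Then $|J - I| \le C\beta$ where $C>0$ is a constant depending only on $\mu_1,\mu_2,b,S$ (and not on $A_1,A_2,D,\beta$). Explicitly, $|J-I| = \frac{\beta\,|\beta D^2(A_1^2/\mu_1 + A_2^2/\mu_2) - 2A_1A_2 D|}{4(\mu_1\mu_2-\beta^2D^2)}$. -/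
/-!
Writing `Δ = μ₁μ₂ - β²D²`, a direct computation gives
`J - I = β (β D² (A₁²/μ₁ + A₂²/μ₂) - 2 A₁A₂D) / (4Δ)`.
The bracket is a difference of two nonnegative terms, each bounded independently of `β`:
`βD ≤ √(μ₁μ₂)` because `Δ > 0`, and `D ≤ 2`, `Aᵢ ≤ b`. The hypothesis on `S` keeps `Δ`
away from `0`, so `|J - I| / β` is bounded uniformly.
-/

open Real

noncomputable section

namespace CoupledEnergy

variable (μ₁ μ₂ β A₁ A₂ D : ℝ)

def gap : ℝ := μ₁ * μ₂ - β ^ 2 * D ^ 2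

/-- The value of `J_β` on the constraint set `|uᵢ|₄ = 1`, with `Aᵢ = ‖uᵢ‖²_{λᵢ}`. -/
def coupled : ℝ := (1 / 4) * (μ₂ * A₁ ^ 2 - 2 * β * A₁ * A₂ * D + μ₁ * A₂ ^ 2) / gap μ₁ μ₂ β D

/-- `I₁(u₁) + I₂(u₂)` on the same constraint set. -/
def decoupled : ℝ := A₁ ^ 2 / (4 * μ₁) + A₂ ^ 2 / (4 * μ₂)

def defect : ℝ := β * D ^ 2 * (A₁ ^ 2 / μ₁ + A₂ ^ 2 / μ₂) - 2 * A₁ * A₂ * D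

variable {μ₁ μ₂ β A₁ A₂ D}

theorem coupled_sub_decoupled (hμ₁ : μ₁ ≠ 0) (hμ₂ : μ₂ ≠ 0) (hgap : gap μ₁ μ₂ β D ≠ 0) :
    coupled μ₁ μ₂ β A₁ A₂ D - decoupled μ₁ μ₂ A₁ A₂ =
      β * defect μ₁ μ₂ β A₁ A₂ D / (4 * gap μ₁ μ₂ β D) := by
  unfold gap at hgap
  unfold coupled decoupled defect gap
  rw [div_sub' hgap, div_eq_div_iff hgap (by positivity)]
  field_simp
  ring

theorem abs_coupled_sub_decoupled (hμ₁ : μ₁ ≠ 0) (hμ₂ : μ₂ ≠ 0) (hβ : 0 ≤ β)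
    (hgap : 0 < gap μ₁ μ₂ β D) :
    |coupled μ₁ μ₂ β A₁ A₂ D - decoupled μ₁ μ₂ A₁ A₂| =
      β * |defect μ₁ μ₂ β A₁ A₂ D| / (4 * gap μ₁ μ₂ β D) := by
  rw [coupled_sub_decoupled hμ₁ hμ₂ hgap.ne', abs_div, abs_mul, abs_of_nonneg hβ,
    abs_of_pos (mul_pos four_pos hgap)]

theorem mul_le_sqrt_of_gap_pos (hβ : 0 ≤ β) (hD : 0 ≤ D) (hgap : 0 < gap μ₁ μ₂ β D) :
    β * D ≤ √(μ₁ * μ₂) :=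
  (Real.le_sqrt (by positivity) (by unfold gap at hgap; linarith [sq_nonneg (β * D)])).2 <| by
    unfold gap at hgap; linarith [mul_pow β D 2]

theorem abs_defect_le {b : ℝ} (hμ₁ : 0 < μ₁) (hμ₂ : 0 < μ₂) (hβ : 0 ≤ β)
    (hA₁ : 0 ≤ A₁) (hA₂ : 0 ≤ A₂) (hD : 0 ≤ D) (hD2 : D ≤ 2) (hA₁b : A₁ ≤ b) (hA₂b : A₂ ≤ b)
    (hgap : 0 < gap μ₁ μ₂ β D) :
    |defect μ₁ μ₂ β A₁ A₂ D| ≤ 2 * √(μ₁ * μ₂) * b ^ 2 * (1 / μ₁ + 1 / μ₂) + 4 * b ^ 2 := by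
  have hβD2 : β * D ^ 2 ≤ 2 * √(μ₁ * μ₂) := by
    have hβD := mul_le_sqrt_of_gap_pos hβ hD hgap
    calc β * D ^ 2 = (β * D) * D := by ring
      _ ≤ √(μ₁ * μ₂) * 2 := mul_le_mul hβD hD2 hD (sqrt_nonneg _)
      _ = 2 * √(μ₁ * μ₂) := by ring
  have hsum : A₁ ^ 2 / μ₁ + A₂ ^ 2 / μ₂ ≤ b ^ 2 * (1 / μ₁ + 1 / μ₂) := by
    have h₁ : A₁ ^ 2 ≤ b ^ 2 := pow_le_pow_left₀ hA₁ hA₁b 2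
    have h₂ : A₂ ^ 2 ≤ b ^ 2 := pow_le_pow_left₀ hA₂ hA₂b 2
    calc A₁ ^ 2 / μ₁ + A₂ ^ 2 / μ₂ ≤ b ^ 2 / μ₁ + b ^ 2 / μ₂ := by gcongr
      _ = b ^ 2 * (1 / μ₁ + 1 / μ₂) := by ring
  have hcoupling : β * D ^ 2 * (A₁ ^ 2 / μ₁ + A₂ ^ 2 / μ₂) ≤
      2 * √(μ₁ * μ₂) * b ^ 2 * (1 / μ₁ + 1 / μ₂) := by
    calc β * D ^ 2 * (A₁ ^ 2 / μ₁ + A₂ ^ 2 / μ₂)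
        ≤ 2 * √(μ₁ * μ₂) * (b ^ 2 * (1 / μ₁ + 1 / μ₂)) := by gcongr
      _ = 2 * √(μ₁ * μ₂) * b ^ 2 * (1 / μ₁ + 1 / μ₂) := by ring
  have hcross : 2 * A₁ * A₂ * D ≤ 4 * b ^ 2 := by
    have hb : 0 ≤ b := hA₁.trans hA₁b
    calc 2 * A₁ * A₂ * D ≤ 2 * b * b * 2 := by gcongr
      _ = 4 * b ^ 2 := by ring
  unfold defect
  calc _ ≤ |β * D ^ 2 * (A₁ ^ 2 / μ₁ + A₂ ^ 2 / μ₂)| + |2 * A₁ * A₂ * D| := abs_sub _ _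
    _ ≤ _ := by
      rw [abs_of_nonneg (by positivity), abs_of_nonneg (by positivity)]
      exact add_le_add hcoupling hcross

end CoupledEnergy

end

open CoupledEnergy in
theorem stmt_5 (μ₁ μ₂ b S : ℝ) (hμ₁ : 0 < μ₁) (hμ₂ : 0 < μ₂) (hb : 0 < b) (hS : 0 < S) :
    ∃ C : ℝ, 0 < C ∧
      ∀ β A₁ A₂ D : ℝ, 0 < β → 0 < A₁ → 0 < A₂ → 0 < D →
        D ≤ 2 → A₁ ≤ b → A₂ ≤ b →
        0 < μ₁ * μ₂ - β ^ 2 * D ^ 2 →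
        μ₂ ^ 2 * S ^ 2 / (2 ^ 8 * b ^ 2) ≤ μ₁ * μ₂ - β ^ 2 * D ^ 2 →
        (let J := (1 / 4) * (μ₂ * A₁ ^ 2 - 2 * β * A₁ * A₂ * D + μ₁ * A₂ ^ 2)
            / (μ₁ * μ₂ - β ^ 2 * D ^ 2)
         let I := A₁ ^ 2 / (4 * μ₁) + A₂ ^ 2 / (4 * μ₂)
         |J - I| = β * |β * D ^ 2 * (A₁ ^ 2 / μ₁ + A₂ ^ 2 / μ₂) - 2 * A₁ * A₂ * D|
            / (4 * (μ₁ * μ₂ - β ^ 2 * D ^ 2)) ∧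
         |J - I| ≤ C * β) := by
  set N := 2 * √(μ₁ * μ₂) * b ^ 2 * (1 / μ₁ + 1 / μ₂) + 4 * b ^ 2
  set gapMin := μ₂ ^ 2 * S ^ 2 / (2 ^ 8 * b ^ 2)
  have hgapMin : 0 < gapMin := by positivity
  refine ⟨N / (4 * gapMin), by positivity, ?_⟩
  intro β A₁ A₂ D hβ hA₁ hA₂ hD hD2 hA₁b hA₂b hgap hgapge
  have habs := abs_coupled_sub_decoupled (A₁ := A₁) (A₂ := A₂) hμ₁.ne' hμ₂.ne' hβ.le hgap
  have hdefect := abs_defect_le hμ₁ hμ₂ hβ.le hA₁.le hA₂.le hD.le hD2 hA₁b hA₂b hgap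
  refine ⟨habs, ?_⟩
  calc |coupled μ₁ μ₂ β A₁ A₂ D - decoupled μ₁ μ₂ A₁ A₂|
      = β * |defect μ₁ μ₂ β A₁ A₂ D| / (4 * gap μ₁ μ₂ β D) := habs
    _ ≤ β * N / (4 * gapMin) := by
        gcongr
        exact hgapge
    _ = N / (4 * gapMin) * β := by ring
end
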